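/- Let R_m be an h × δh rectangle with longest side along direction θ and R_n a k × ηk rectangle with longest side along direction β, both with slopes θ, β ∈ [0, 1/10], and h > k. Then there is an absolute constant C such that for any centers, |R_m ∩ R_n| / (|R_m||R_n|) ≤ C / |R|, where R is a rectangle of dimensions 2h × 2w with longest side along θ, w = max{ηk, δh, k·sin|θ − β|}, centered appropriately; equivalently |R_m ∩ R_n| ≤ C·|R_m||R_n|/(4hw). -/

import Mathlib

/-!
Write `V = |R_m ∩ R_n|`; it suffices to bound `V` times each term of the maximum `w` by
`6 · δh · ηk · k`. The intersection lies in `R_n`, so `V ≤ k · ηk`. Two points of `R_n` are at most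
`k + ηk` apart along any direction, and two points of `R_m` at most `δh` apart across `θ`, so the
intersection lies in a `2(k + ηk) × 2δh` rectangle along `θ`. Finally it lies in the parallelogram
cut out by the strips of widths `δh`, `ηk` along `θ`, `β`, of area
`δh · ηk · √(1+θ²)√(1+β²) / |θ - β|`, and `sin |θ - β| ≤ |θ - β|`.
-/
open MeasureTheory Set

/-- The rectangle in the plane with center `c`, longest side of length `a` with slope `σ`,
and shorter side of length `b`. -/
def slopeRect (c : ℝ × ℝ) (σ a b : ℝ) : Set (ℝ × ℝ) :=
  {p | |((p.1 - c.1) + σ * (p.2 - c.2)) / Real.sqrt (1 + σ ^ 2)| ≤ a / 2 ∧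
       |((p.2 - c.2) - σ * (p.1 - c.1)) / Real.sqrt (1 + σ ^ 2)| ≤ b / 2}

open Metric

theorem volume_setOf_linear_mem_and_mem {f g : ℝ × ℝ → ℝ} {a b c d : ℝ}
    (hf : ∀ p, f p = a * p.1 + b * p.2) (hg : ∀ p, g p = c * p.1 + d * p.2)
    (hdet : a * d - b * c ≠ 0) (I J : Set ℝ) :
    volume {p | f p ∈ I ∧ g p ∈ J} =
      ENNReal.ofReal |(a * d - b * c)⁻¹| * (volume I * volume J) := by
  let M : (ℝ × ℝ) →ₗ[ℝ] ℝ × ℝ :=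
    Matrix.toLin (Module.Basis.finTwoProd ℝ) (Module.Basis.finTwoProd ℝ) !![a, b; c, d]
  have hM : LinearMap.det M = a * d - b * c := by
    rw [LinearMap.det_toLin, Matrix.det_fin_two_of]
  have hset : {p | f p ∈ I ∧ g p ∈ J} = M ⁻¹' (I ×ˢ J) := by
    ext p
    simp [M, hf, hg]
  rw [hset, Measure.addHaar_preimage_linearMap volume (hM ▸ hdet), hM, Measure.volume_eq_prod,
    Measure.prod_prod]

noncomputable def alongSlope (σ : ℝ) (x : ℝ × ℝ) : ℝ := (x.1 + σ * x.2) / √(1 + σ ^ 2)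

noncomputable def acrossSlope (σ : ℝ) (x : ℝ × ℝ) : ℝ := (x.2 - σ * x.1) / √(1 + σ ^ 2)

section SlopeCoordinates

variable (σ : ℝ) (x y : ℝ × ℝ)

theorem alongSlope_eq : alongSlope σ x =
    (√(1 + σ ^ 2))⁻¹ * x.1 + σ / √(1 + σ ^ 2) * x.2 := by
  unfold alongSlope; ring

theorem acrossSlope_eq : acrossSlope σ x =
    -(σ / √(1 + σ ^ 2)) * x.1 + (√(1 + σ ^ 2))⁻¹ * x.2 := by
  unfold acrossSlope; ring

theorem alongSlope_sub : alongSlope σ (x - y) = alongSlope σ x - alongSlope σ y := by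
  simp only [alongSlope, Prod.fst_sub, Prod.snd_sub]; ring

theorem acrossSlope_sub : acrossSlope σ (x - y) = acrossSlope σ x - acrossSlope σ y := by
  simp only [acrossSlope, Prod.fst_sub, Prod.snd_sub]; ring

theorem alongSlope_sq_add_acrossSlope_sq :
    alongSlope σ x ^ 2 + acrossSlope σ x ^ 2 = x.1 ^ 2 + x.2 ^ 2 := by
  have hs : √(1 + σ ^ 2) ^ 2 = 1 + σ ^ 2 := Real.sq_sqrt (by positivity)
  have hs0 : √(1 + σ ^ 2) ≠ 0 := by positivity
  unfold alongSlope acrossSlope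
  field_simp
  rw [hs]
  ring

theorem abs_alongSlope_le (τ : ℝ) : |alongSlope σ x| ≤ |alongSlope τ x| + |acrossSlope τ x| := by
  rw [← abs_of_nonneg (by positivity : 0 ≤ |alongSlope τ x| + |acrossSlope τ x|), ← sq_le_sq]
  nlinarith [alongSlope_sq_add_acrossSlope_sq σ x, alongSlope_sq_add_acrossSlope_sq τ x,
    sq_abs (alongSlope τ x), sq_abs (acrossSlope τ x), sq_nonneg (acrossSlope σ x),
    abs_nonneg (alongSlope τ x), abs_nonneg (acrossSlope τ x)]

end SlopeCoordinates

def slopeStrip (c : ℝ × ℝ) (σ b : ℝ) : Set (ℝ × ℝ) := {p | |acrossSlope σ (p - c)| ≤ b / 2}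

section SlopeRect

variable {c c' p q : ℝ × ℝ} {σ τ a b a' b' : ℝ}

theorem mem_slopeRect :
    p ∈ slopeRect c σ a b ↔ |alongSlope σ (p - c)| ≤ a / 2 ∧ |acrossSlope σ (p - c)| ≤ b / 2 :=
  Iff.rfl

theorem slopeRect_subset_slopeStrip : slopeRect c σ a b ⊆ slopeStrip c σ b := fun _ hp => hp.2

theorem slopeRect_subset_of_mem (hq : q ∈ slopeRect c σ a b) :
    slopeRect c σ a b ⊆ slopeRect q σ (2 * a) (2 * b) := by
  intro p hp
  rw [mem_slopeRect] at hp hq ⊢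
  rw [← sub_sub_sub_cancel_right p q c, alongSlope_sub, acrossSlope_sub]
  constructor
  · linarith [abs_sub (alongSlope σ (p - c)) (alongSlope σ (q - c))]
  · linarith [abs_sub (acrossSlope σ (p - c)) (acrossSlope σ (q - c))]

theorem slopeRect_eq_setOf (c : ℝ × ℝ) (σ a b : ℝ) : slopeRect c σ a b =
    {p | alongSlope σ p ∈ closedBall (alongSlope σ c) (a / 2) ∧
      acrossSlope σ p ∈ closedBall (acrossSlope σ c) (b / 2)} := by
  ext p
  simp only [mem_slopeRect, alongSlope_sub, acrossSlope_sub, mem_ofPred_eq, mem_closedBall,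
    Real.dist_eq]

theorem slopeStrip_eq_setOf (c : ℝ × ℝ) (σ b : ℝ) :
    slopeStrip c σ b = {p | acrossSlope σ p ∈ closedBall (acrossSlope σ c) (b / 2)} := by
  ext p
  simp only [slopeStrip, acrossSlope_sub, mem_ofPred_eq, mem_closedBall, Real.dist_eq]

theorem volume_slopeRect (c : ℝ × ℝ) (σ a b : ℝ) :
    volume (slopeRect c σ a b) = ENNReal.ofReal a * ENNReal.ofReal b := by
  have hs : √(1 + σ ^ 2) ^ 2 = 1 + σ ^ 2 := Real.sq_sqrt (by positivity)
  have hs0 : √(1 + σ ^ 2) ≠ 0 := by positivity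
  have hdet : (√(1 + σ ^ 2))⁻¹ * (√(1 + σ ^ 2))⁻¹ -
      σ / √(1 + σ ^ 2) * -(σ / √(1 + σ ^ 2)) = 1 := by
    field_simp
    rw [hs]
    ring
  rw [slopeRect_eq_setOf, volume_setOf_linear_mem_and_mem (alongSlope_eq σ) (acrossSlope_eq σ)
    (by rw [hdet]; exact one_ne_zero), hdet, Real.volume_closedBall, Real.volume_closedBall]
  norm_num [mul_div_cancel₀]

/-- The parallelogram cut out by two strips has area `b b' / sin φ`, where
`sin φ = |σ - τ| / (√(1+σ²) √(1+τ²))` is the sine of the angle between them. -/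
theorem volume_slopeStrip_inter_slopeStrip (hστ : σ ≠ τ) (c c' : ℝ × ℝ) (b b' : ℝ) :
    volume (slopeStrip c σ b ∩ slopeStrip c' τ b') = ENNReal.ofReal
      (√(1 + σ ^ 2) * √(1 + τ ^ 2) / |σ - τ|) *
        (ENNReal.ofReal b * ENNReal.ofReal b') := by
  have hs0 : √(1 + σ ^ 2) ≠ 0 := by positivity
  have ht0 : √(1 + τ ^ 2) ≠ 0 := by positivity
  have hdet : -(σ / √(1 + σ ^ 2)) * (√(1 + τ ^ 2))⁻¹ -
      (√(1 + σ ^ 2))⁻¹ * -(τ / √(1 + τ ^ 2)) =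
        (τ - σ) / (√(1 + σ ^ 2) * √(1 + τ ^ 2)) := by
    field_simp
    ring
  have hne : τ - σ ≠ 0 := sub_ne_zero.2 (Ne.symm hστ)
  rw [slopeStrip_eq_setOf, slopeStrip_eq_setOf, ← ofPred_and,
    volume_setOf_linear_mem_and_mem (acrossSlope_eq σ) (acrossSlope_eq τ)
      (by rw [hdet]; positivity), hdet, Real.volume_closedBall, Real.volume_closedBall, inv_div,
    abs_div, abs_of_pos (by positivity), abs_sub_comm]
  norm_num [mul_div_cancel₀]

theorem slopeRect_inter_subset (hq : q ∈ slopeRect c σ a b ∩ slopeRect c' τ a' b') :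
    slopeRect c σ a b ∩ slopeRect c' τ a' b' ⊆ slopeRect q σ (2 * (a' + b')) (2 * b) := by
  rintro p ⟨hp, hp'⟩
  have h := mem_slopeRect.1 (slopeRect_subset_of_mem hq.1 hp)
  have h' := mem_slopeRect.1 (slopeRect_subset_of_mem hq.2 hp')
  refine mem_slopeRect.2 ⟨?_, h.2⟩
  linarith [abs_alongSlope_le σ (p - q) τ]

theorem toReal_volume_slopeRect (ha : 0 ≤ a) (hb : 0 ≤ b) :
    (volume (slopeRect c σ a b)).toReal = a * b := by
  rw [volume_slopeRect, ENNReal.toReal_mul, ENNReal.toReal_ofReal ha, ENNReal.toReal_ofReal hb]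

theorem toReal_volume_slopeRect_inter_le (hab' : 0 ≤ a' + b') (hb : 0 ≤ b) :
    (volume (slopeRect c σ a b ∩ slopeRect c' τ a' b')).toReal ≤ 2 * (a' + b') * (2 * b) := by
  apply ENNReal.toReal_le_of_le_ofReal (by positivity)
  rcases (slopeRect c σ a b ∩ slopeRect c' τ a' b').eq_empty_or_nonempty with h | ⟨q, hq⟩
  · simp [h]
  · rw [ENNReal.ofReal_mul (by positivity), ← volume_slopeRect q σ]
    exact measure_mono (slopeRect_inter_subset hq)

theorem toReal_volume_slopeRect_inter_mul_abs_sub_le (hb : 0 ≤ b) (hb' : 0 ≤ b') :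
    (volume (slopeRect c σ a b ∩ slopeRect c' τ a' b')).toReal * |σ - τ| ≤
      √(1 + σ ^ 2) * √(1 + τ ^ 2) * (b * b') := by
  rcases eq_or_ne σ τ with rfl | hστ
  · rw [sub_self, abs_zero, mul_zero]
    positivity
  have hpos : 0 < |σ - τ| := abs_pos.2 (sub_ne_zero.2 hστ)
  rw [← le_div_iff₀ hpos]
  apply ENNReal.toReal_le_of_le_ofReal (by positivity)
  calc volume (slopeRect c σ a b ∩ slopeRect c' τ a' b')
      ≤ volume (slopeStrip c σ b ∩ slopeStrip c' τ b') :=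
        measure_mono (inter_subset_inter slopeRect_subset_slopeStrip slopeRect_subset_slopeStrip)
    _ = ENNReal.ofReal (√(1 + σ ^ 2) * √(1 + τ ^ 2) / |σ - τ|) *
          (ENNReal.ofReal b * ENNReal.ofReal b') := volume_slopeStrip_inter_slopeStrip hστ c c' b b'
    _ = ENNReal.ofReal (√(1 + σ ^ 2) * √(1 + τ ^ 2) * (b * b') / |σ - τ|) := by
        rw [← ENNReal.ofReal_mul hb, ← ENNReal.ofReal_mul (by positivity)]
        ring_nf

end SlopeRect

theorem sqrt_one_add_sq_mul_sqrt_one_add_sq_le_two {σ τ : ℝ} (hσ : |σ| ≤ 1) (hτ : |τ| ≤ 1) :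
    √(1 + σ ^ 2) * √(1 + τ ^ 2) ≤ 2 := by
  rw [← Real.sqrt_mul (by positivity), Real.sqrt_le_left (by norm_num)]
  have hσ2 : σ ^ 2 ≤ 1 := by rw [← sq_abs]; nlinarith [abs_nonneg σ]
  have hτ2 : τ ^ 2 ≤ 1 := by rw [← sq_abs]; nlinarith [abs_nonneg τ]
  nlinarith

/-- Overlap estimate: if `R_m` is an `h × δh` rectangle along slope `θ` and `R_n` a
`k × ηk` rectangle along slope `β`, with `θ, β ∈ [0,1/10]` and `h > k`, then
`|R_m ∩ R_n| ≤ C |R_m||R_n| / (4hw)` with `w = max{ηk, δh, k sin|θ−β|}`, i.e. the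
intersection kernel is dominated by the average over a `2h × 2w` rectangle along `θ`. -/
theorem stmt10 :
    ∃ C : ℝ, 0 < C ∧
    ∀ (cm cn : ℝ × ℝ) (h θ δ k β η : ℝ),
      0 < k → k < h → δ ∈ Ioo (0:ℝ) (1/2) → η ∈ Ioo (0:ℝ) (1/2) →
      θ ∈ Icc (0:ℝ) (1/10) → β ∈ Icc (0:ℝ) (1/10) →
      (volume (slopeRect cm θ h (δ * h) ∩ slopeRect cn β k (η * k))).toReal ≤
        C * (volume (slopeRect cm θ h (δ * h))).toReal *
            (volume (slopeRect cn β k (η * k))).toReal /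
          (4 * h * max (max (η * k) (δ * h)) (k * Real.sin |θ - β|)) := by
  refine ⟨24, by norm_num, ?_⟩
  rintro cm cn h θ δ k β η hk hkh ⟨hδ, -⟩ ⟨hη, hη2⟩ ⟨hθ0, hθ1⟩ ⟨hβ0, hβ1⟩
  have hh : 0 < h := hk.trans hkh
  set V := (volume (slopeRect cm θ h (δ * h) ∩ slopeRect cn β k (η * k))).toReal
  have hV : 0 ≤ V := ENNReal.toReal_nonneg
  have hlong : V ≤ 2 * (k + η * k) * (2 * (δ * h)) :=
    toReal_volume_slopeRect_inter_le (by positivity) (by positivity)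
  have hshort : V ≤ k * (η * k) :=
    (measureReal_mono inter_subset_right (by rw [volume_slopeRect]; finiteness)).trans_eq
      (toReal_volume_slopeRect hk.le (by positivity))
  have hangle : V * |θ - β| ≤ 2 * (δ * h * (η * k)) :=
    (toReal_volume_slopeRect_inter_mul_abs_sub_le (by positivity) (by positivity)).trans
      (mul_le_mul_of_nonneg_right (sqrt_one_add_sq_mul_sqrt_one_add_sq_le_two
        (abs_le.2 ⟨by linarith, by linarith⟩) (abs_le.2 ⟨by linarith, by linarith⟩))
        (by positivity))
  have hsin : V * Real.sin |θ - β| ≤ 2 * (δ * h * (η * k)) :=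
    (mul_le_mul_of_nonneg_left (Real.sin_le (abs_nonneg _)) hV).trans hangle
  have hw : V * max (max (η * k) (δ * h)) (k * Real.sin |θ - β|) ≤ 6 * (δ * h) * (η * k) * k := by
    rw [mul_max_of_nonneg _ _ hV, mul_max_of_nonneg _ _ hV]
    have hP : 0 < δ * h * (η * k) * k := by positivity
    refine max_le (max_le ?_ ?_) ?_
    · nlinarith [mul_le_mul_of_nonneg_right hlong (by positivity : 0 ≤ η * k),
        mul_pos (sub_pos.2 hη2) hP]
    · nlinarith [mul_le_mul_of_nonneg_right hshort (by positivity : 0 ≤ δ * h)]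
    · nlinarith [mul_le_mul_of_nonneg_left hsin hk.le]
  rw [toReal_volume_slopeRect hh.le (by positivity), toReal_volume_slopeRect hk.le (by positivity),
    le_div_iff₀ (by positivity)]
  nlinarith [mul_le_mul_of_nonneg_left hw (by positivity : 0 ≤ 4 * h)]
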